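/- The algebra 𝒜q is generated as an F-algebra by the two elements W_0, W_1 together with the central elements Δ_{k+1} (k ∈ ℕ); that is, the smallest unital F-subalgebra of 𝒜q containing W_0, W_1 and all Δ_{k+1} is 𝒜q itself. -/

import Mathlib

/- STATEMENT 5: 𝒜q is generated by W_0, W_1 and the central elements Δ_{k+1}. -/

noncomputable section

namespace Alt

/-- The base field `F = ℚ(q)`. -/
abbrev F : Type := RatFunc ℚ

/-- The indeterminate `q`. -/
def q : F := RatFunc.X

/-- Commutator `[x,y] = xy - yx`. -/
def br {A : Type*} [Ring A] (x y : A) : A := x * y - y * x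

/-- `q`-commutator `[x,y]_q = q·xy - q⁻¹·yx`. -/
def qbr {A : Type*} [Ring A] [Algebra F A] (x y : A) : A :=
  q • (x * y) - q⁻¹ • (y * x)

/-- `q⁻¹`-commutator `[x,y]_{q⁻¹} = q⁻¹·xy - q·yx`. -/
def qbr' {A : Type*} [Ring A] [Algebra F A] (x y : A) : A :=
  q⁻¹ • (x * y) - q • (y * x)

/-- Generators of the algebra `𝒜q`: `wm k ↦ W_{-k}`, `wp k ↦ W_{k+1}`,
`g k ↦ G_{k+1}`, `gt k ↦ G̃_{k+1}`. -/
inductive Gen : Type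
  | wm : ℕ → Gen
  | wp : ℕ → Gen
  | g : ℕ → Gen
  | gt : ℕ → Gen

/-- The free `F`-algebra on the generators. -/
abbrev FA : Type := FreeAlgebra F Gen

/-- `W_{-k}` in the free algebra. -/
def fWm (k : ℕ) : FA := FreeAlgebra.ι F (Gen.wm k)
/-- `W_{k+1}` in the free algebra. -/
def fWp (k : ℕ) : FA := FreeAlgebra.ι F (Gen.wp k)
/-- `G_{k+1}` in the free algebra. -/
def fG (k : ℕ) : FA := FreeAlgebra.ι F (Gen.g k)
/-- `G̃_{k+1}` in the free algebra. -/
def fGt (k : ℕ) : FA := FreeAlgebra.ι F (Gen.gt k)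

/-- The defining relations of `𝒜q` (with parameter `ρ`). -/
inductive rel (ρ : F) : FA → FA → Prop
  | r1a (k : ℕ) : rel ρ (br (fWm 0) (fWp k)) ((q + q⁻¹)⁻¹ • (fGt k - fG k))
  | r1b (k : ℕ) : rel ρ (br (fWm k) (fWp 0)) ((q + q⁻¹)⁻¹ • (fGt k - fG k))
  | r2a (k : ℕ) : rel ρ (qbr (fWm 0) (fG k)) (ρ • fWm (k + 1))
  | r2b (k : ℕ) : rel ρ (qbr (fGt k) (fWm 0)) (ρ • fWm (k + 1))
  | r3a (k : ℕ) : rel ρ (qbr (fG k) (fWp 0)) (ρ • fWp (k + 1))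
  | r3b (k : ℕ) : rel ρ (qbr (fWp 0) (fGt k)) (ρ • fWp (k + 1))
  | r4a (k l : ℕ) : rel ρ (br (fWm k) (fWm l)) 0
  | r4b (k l : ℕ) : rel ρ (br (fWp k) (fWp l)) 0
  | r5 (k l : ℕ) : rel ρ (br (fWm k) (fWp l) + br (fWp k) (fWm l)) 0
  | r6 (k l : ℕ) : rel ρ (br (fWm k) (fG l) + br (fG k) (fWm l)) 0
  | r7 (k l : ℕ) : rel ρ (br (fWm k) (fGt l) + br (fGt k) (fWm l)) 0
  | r8 (k l : ℕ) : rel ρ (br (fWp k) (fG l) + br (fG k) (fWp l)) 0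
  | r9 (k l : ℕ) : rel ρ (br (fWp k) (fGt l) + br (fGt k) (fWp l)) 0
  | r10a (k l : ℕ) : rel ρ (br (fG k) (fG l)) 0
  | r10b (k l : ℕ) : rel ρ (br (fGt k) (fGt l)) 0
  | r11 (k l : ℕ) : rel ρ (br (fGt k) (fG l) + br (fG k) (fGt l)) 0

/-- The algebra `𝒜q`: the quotient of the free algebra by the two-sided ideal
generated by the defining relations. -/
abbrev Aq (ρ : F) : Type := RingQuot (rel ρ)

/-- The generator `W_{-k}` of `𝒜q`. -/
def Wm (ρ : F) (k : ℕ) : Aq ρ := RingQuot.mkAlgHom F (rel ρ) (fWm k)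
/-- The generator `W_{k+1}` of `𝒜q`. -/
def Wp (ρ : F) (k : ℕ) : Aq ρ := RingQuot.mkAlgHom F (rel ρ) (fWp k)
/-- The generator `G_{k+1}` of `𝒜q`. -/
def G (ρ : F) (k : ℕ) : Aq ρ := RingQuot.mkAlgHom F (rel ρ) (fG k)
/-- The generator `G̃_{k+1}` of `𝒜q`. -/
def Gt (ρ : F) (k : ℕ) : Aq ρ := RingQuot.mkAlgHom F (rel ρ) (fGt k)

/-- The element `Y_{n+1}` of `𝒜q`. -/
def Y (ρ : F) (n : ℕ) : Aq ρ :=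
  q ^ (-(n : ℤ) - 1) • G ρ n + q ^ ((n : ℤ) + 1) • Gt ρ n -
    (q ^ (2 : ℤ) - q ^ (-2 : ℤ)) •
      ∑ k ∈ Finset.range (n + 1), q ^ (2 * (k : ℤ) - (n : ℤ)) • (Wm ρ k * Wp ρ (n - k)) +
    ((q - q⁻¹) / ρ) •
      ∑ k ∈ Finset.range n, q ^ (2 * (k : ℤ) - (n : ℤ) + 1) • (Gt ρ k * G ρ (n - 1 - k))

/-- The central element `Δ_{n+1} = (Y_{n+1} + σ(Y_{n+1}))/(q^{n+1} + q^{-n-1})`,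
for a given algebra automorphism `σ` of `𝒜q`. -/
def Δd (ρ : F) (σ : Aq ρ ≃ₐ[F] Aq ρ) (n : ℕ) : Aq ρ :=
  (q ^ ((n : ℤ) + 1) + q ^ (-(n : ℤ) - 1))⁻¹ • (Y ρ n + σ (Y ρ n))

/-!
Induct on `n`, showing that `W_{-k}, W_{k+1}` (`k ≤ n`) and `G_{k+1}, G̃_{k+1}` (`k < n`) lie in
the subalgebra `A` generated by `W_0, W_1` and the `Δ`'s. Write `Y_{n+1} = q^{-n-1} G_{n+1} +
q^{n+1} G̃_{n+1} + R`, where `R` only involves lower generators; since `σ` permutes the generators,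
`σ R` does too, so `Δ_{n+1}` gives `G_{n+1} + G̃_{n+1} ∈ A`. The relation
`[W_0, W_{n+1}] = (G̃_{n+1} - G_{n+1})/(q + q⁻¹)` gives the difference, hence both, and the
`q`-commutator relations `[W_0, G_{n+1}]_q = ρ W_{-n-1}`, `[G_{n+1}, W_1]_q = ρ W_{n+2}` give the
next `W`'s.
-/

theorem q_pow_add_one_ne_zero (m : ℕ) (hm : 0 < m) : q ^ m + 1 ≠ 0 := fun h =>
  RatFunc.transcendental_X (K := ℚ)
    ⟨Polynomial.X ^ m + Polynomial.C 1, Polynomial.X_pow_add_C_ne_zero hm 1, by simpa [q] using h⟩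

theorem q_zpow_add_zpow_neg_ne_zero (n : ℕ) : q ^ ((n : ℤ) + 1) + q ^ (-(n : ℤ) - 1) ≠ 0 := by
  have hq : q ≠ 0 := RatFunc.X_ne_zero
  have : q ^ ((n : ℤ) + 1) + q ^ (-(n : ℤ) - 1) = q ^ (-(n : ℤ) - 1) * (q ^ (2 * n + 2) + 1) := by
    rw [mul_add, mul_one, ← zpow_natCast, ← zpow_add₀ hq]
    push_cast; ring_nf
  rw [this]
  exact mul_ne_zero (zpow_ne_zero _ hq) (q_pow_add_one_ne_zero _ (by omega))

theorem mem_of_add_mem_of_sub_mem {K M S : Type*} [Field K] [NeZero (2 : K)] [AddCommGroup M]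
    [Module K M] [SetLike S M] [AddSubgroupClass S M] [SMulMemClass S K M] {s : S} {x y : M}
    (hadd : x + y ∈ s) (hsub : y - x ∈ s) : x ∈ s := by
  have : x = (2 : K)⁻¹ • ((x + y) - (y - x)) := by
    rw [eq_inv_smul_iff₀ two_ne_zero]; module
  rw [this]
  exact SMulMemClass.smul_mem _ (sub_mem hadd hsub)

variable {ρ : F}

theorem Wm_zero_mul_Wp_sub (k : ℕ) :
    Wm ρ 0 * Wp ρ k - Wp ρ k * Wm ρ 0 = (q + q⁻¹)⁻¹ • (Gt ρ k - G ρ k) := by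
  simpa [br, Wm, Wp, G, Gt] using RingQuot.mkAlgHom_rel F (rel.r1a (ρ := ρ) k)

theorem qbr_Wm_zero_G (k : ℕ) :
    q • (Wm ρ 0 * G ρ k) - q⁻¹ • (G ρ k * Wm ρ 0) = ρ • Wm ρ (k + 1) := by
  simpa [qbr, Wm, G] using RingQuot.mkAlgHom_rel F (rel.r2a (ρ := ρ) k)

theorem qbr_G_Wp_zero (k : ℕ) :
    q • (G ρ k * Wp ρ 0) - q⁻¹ • (Wp ρ 0 * G ρ k) = ρ • Wp ρ (k + 1) := by
  simpa [qbr, Wp, G] using RingQuot.mkAlgHom_rel F (rel.r3a (ρ := ρ) k)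

theorem Wm_succ_mem (A : Subalgebra F (Aq ρ)) (hρ : ρ ≠ 0) {k : ℕ} (h0 : Wm ρ 0 ∈ A)
    (hG : G ρ k ∈ A) : Wm ρ (k + 1) ∈ A := by
  rw [← inv_smul_smul₀ hρ (Wm ρ (k + 1)), ← qbr_Wm_zero_G]
  exact A.smul_mem (A.sub_mem (A.smul_mem (A.mul_mem h0 hG) _)
    (A.smul_mem (A.mul_mem hG h0) _)) _

theorem Wp_succ_mem (A : Subalgebra F (Aq ρ)) (hρ : ρ ≠ 0) {k : ℕ} (h0 : Wp ρ 0 ∈ A)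
    (hG : G ρ k ∈ A) : Wp ρ (k + 1) ∈ A := by
  rw [← inv_smul_smul₀ hρ (Wp ρ (k + 1)), ← qbr_G_Wp_zero]
  exact A.smul_mem (A.sub_mem (A.smul_mem (A.mul_mem hG h0) _)
    (A.smul_mem (A.mul_mem h0 hG) _)) _

theorem Gt_sub_G_mem (A : Subalgebra F (Aq ρ)) {k : ℕ} (h0 : Wm ρ 0 ∈ A) (hk : Wp ρ k ∈ A) :
    Gt ρ k - G ρ k ∈ A := by
  have hq : q + q⁻¹ ≠ 0 := by simpa using q_zpow_add_zpow_neg_ne_zero 0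
  rw [← smul_inv_smul₀ hq (Gt ρ k - G ρ k), ← Wm_zero_mul_Wp_sub]
  exact A.smul_mem (A.sub_mem (A.mul_mem h0 hk) (A.mul_mem hk h0)) _

theorem Y_sub_leading_mem (A : Subalgebra F (Aq ρ)) {n : ℕ}
    (hW : ∀ k ≤ n, Wm ρ k ∈ A ∧ Wp ρ k ∈ A) (hG : ∀ k < n, G ρ k ∈ A ∧ Gt ρ k ∈ A) :
    Y ρ n - (q ^ (-(n : ℤ) - 1) • G ρ n + q ^ ((n : ℤ) + 1) • Gt ρ n) ∈ A := by
  have hWW : ∑ k ∈ Finset.range (n + 1),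
      q ^ (2 * (k : ℤ) - (n : ℤ)) • (Wm ρ k * Wp ρ (n - k)) ∈ A :=
    A.sum_mem fun k hk => A.smul_mem (A.mul_mem (hW k (Finset.mem_range_succ_iff.1 hk)).1
      (hW (n - k) (Nat.sub_le n k)).2) _
  have hGG : ∑ k ∈ Finset.range n,
      q ^ (2 * (k : ℤ) - (n : ℤ) + 1) • (Gt ρ k * G ρ (n - 1 - k)) ∈ A :=
    A.sum_mem fun k hk => A.smul_mem (A.mul_mem (hG k (Finset.mem_range.1 hk)).2
      (hG (n - 1 - k) (by have := Finset.mem_range.1 hk; omega)).1) _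
  convert A.sub_mem (A.smul_mem hGG ((q - q⁻¹) / ρ)) (A.smul_mem hWW (q ^ (2 : ℤ) - q ^ (-2 : ℤ)))
    using 1
  rw [Y]
  abel

theorem G_add_Gt_mem (A : Subalgebra F (Aq ρ)) (σ : Aq ρ ≃ₐ[F] Aq ρ)
    (hσ1 : ∀ k : ℕ, σ (Wm ρ k) = Wp ρ k) (hσ2 : ∀ k : ℕ, σ (Wp ρ k) = Wm ρ k)
    (hσ3 : ∀ k : ℕ, σ (G ρ k) = Gt ρ k) (hσ4 : ∀ k : ℕ, σ (Gt ρ k) = G ρ k)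
    {n : ℕ} (hW : ∀ k ≤ n, Wm ρ k ∈ A ∧ Wp ρ k ∈ A)
    (hG : ∀ k < n, G ρ k ∈ A ∧ Gt ρ k ∈ A) (hΔ : Δd ρ σ n ∈ A) : G ρ n + Gt ρ n ∈ A := by
  set c := q ^ ((n : ℤ) + 1) + q ^ (-(n : ℤ) - 1)
  set r := Y ρ n - (q ^ (-(n : ℤ) - 1) • G ρ n + q ^ ((n : ℤ) + 1) • Gt ρ n)
  have hr : r ∈ A := Y_sub_leading_mem A hW hG
  have hσr : σ r ∈ A := by
    refine (Subalgebra.mem_comap _ _ _).1 (Y_sub_leading_mem (A.comap σ.toAlgHom) ?_ ?_)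
    · intro k hk
      simpa [hσ1, hσ2, and_comm] using hW k hk
    · intro k hk
      simpa [hσ3, hσ4, and_comm] using hG k hk
  have hsum : Y ρ n + σ (Y ρ n) = c • (G ρ n + Gt ρ n) + (r + σ r) := by
    simp only [r, c, map_sub, map_add, map_smul, hσ3, hσ4, add_smul, smul_add]
    abel
  have : G ρ n + Gt ρ n = Δd ρ σ n - c⁻¹ • (r + σ r) := by
    rw [Δd, hsum, smul_add, inv_smul_smul₀ (q_zpow_add_zpow_neg_ne_zero n), add_sub_cancel_right]
  rw [this]
  exact A.sub_mem hΔ (A.smul_mem (A.add_mem hr hσr) _)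

theorem generators_mem (A : Subalgebra F (Aq ρ)) (hρ : ρ ≠ 0) (σ : Aq ρ ≃ₐ[F] Aq ρ)
    (hσ1 : ∀ k : ℕ, σ (Wm ρ k) = Wp ρ k) (hσ2 : ∀ k : ℕ, σ (Wp ρ k) = Wm ρ k)
    (hσ3 : ∀ k : ℕ, σ (G ρ k) = Gt ρ k) (hσ4 : ∀ k : ℕ, σ (Gt ρ k) = G ρ k)
    (hWm : Wm ρ 0 ∈ A) (hWp : Wp ρ 0 ∈ A) (hΔ : ∀ n, Δd ρ σ n ∈ A) (n : ℕ) :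
    (∀ k ≤ n, Wm ρ k ∈ A ∧ Wp ρ k ∈ A) ∧ ∀ k < n, G ρ k ∈ A ∧ Gt ρ k ∈ A := by
  induction n with
  | zero => exact ⟨fun k hk => by rw [Nat.le_zero.1 hk]; exact ⟨hWm, hWp⟩, by simp⟩
  | succ n ih =>
    obtain ⟨hW, hG⟩ := ih
    have hadd := G_add_Gt_mem A σ hσ1 hσ2 hσ3 hσ4 hW hG (hΔ n)
    have hsub := Gt_sub_G_mem A hWm (hW n le_rfl).2
    have hGn : G ρ n ∈ A := mem_of_add_mem_of_sub_mem (K := F) hadd hsub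
    have hGtn : Gt ρ n ∈ A := by simpa using A.add_mem hGn hsub
    refine ⟨fun k hk => ?_, fun k hk => ?_⟩
    · rcases Nat.le_succ_iff.1 hk with hk | rfl
      · exact hW k hk
      · exact ⟨Wm_succ_mem A hρ hWm hGn, Wp_succ_mem A hρ hWp hGn⟩
    · rcases Nat.lt_succ_iff_lt_or_eq.1 hk with hk | rfl
      · exact hG k hk
      · exact ⟨hGn, hGtn⟩

theorem eq_top_of_generators_mem {A : Subalgebra F (Aq ρ)}
    (h : ∀ n, Wm ρ n ∈ A ∧ Wp ρ n ∈ A ∧ G ρ n ∈ A ∧ Gt ρ n ∈ A) : A = ⊤ := by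
  rw [eq_top_iff, ← (RingQuot.mkAlgHom F (rel ρ)).range_eq_top.2
    (RingQuot.mkAlgHom_surjective F (rel ρ)), ← Algebra.map_top, ← FreeAlgebra.adjoin_range_ι,
    AlgHom.map_adjoin, Algebra.adjoin_le_iff]
  rintro _ ⟨_, ⟨x, rfl⟩, rfl⟩
  cases x with
  | wm n => exact (h n).1
  | wp n => exact (h n).2.1
  | g n => exact (h n).2.2.1
  | gt n => exact (h n).2.2.2

/-- `𝒜q` is generated as an `F`-algebra by `W_0`, `W_1` and the central elements
`Δ_{k+1}` (`k ∈ ℕ`), where `σ` is the algebra automorphism of `𝒜q` determined by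
`σ(W_{-k}) = W_{k+1}`, `σ(W_{k+1}) = W_{-k}`, `σ(G_{k+1}) = G̃_{k+1}`,
`σ(G̃_{k+1}) = G_{k+1}`. -/
theorem statement5 (ρ : F) (hρ : ρ ≠ 0) (σ : Aq ρ ≃ₐ[F] Aq ρ)
    (hσ1 : ∀ k : ℕ, σ (Wm ρ k) = Wp ρ k) (hσ2 : ∀ k : ℕ, σ (Wp ρ k) = Wm ρ k)
    (hσ3 : ∀ k : ℕ, σ (G ρ k) = Gt ρ k) (hσ4 : ∀ k : ℕ, σ (Gt ρ k) = G ρ k) :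
    Algebra.adjoin F ({Wm ρ 0, Wp ρ 0} ∪ Set.range (Δd ρ σ)) = ⊤ := by
  set A := Algebra.adjoin F ({Wm ρ 0, Wp ρ 0} ∪ Set.range (Δd ρ σ))
  have hWm : Wm ρ 0 ∈ A := Algebra.subset_adjoin (Or.inl (Set.mem_insert _ _))
  have hWp : Wp ρ 0 ∈ A := Algebra.subset_adjoin (Or.inl (Set.mem_insert_of_mem _ rfl))
  have hΔ : ∀ n, Δd ρ σ n ∈ A := fun n => Algebra.subset_adjoin (Or.inr ⟨n, rfl⟩)
  refine eq_top_of_generators_mem fun n => ?_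
  obtain ⟨hW, hG⟩ := generators_mem A hρ σ hσ1 hσ2 hσ3 hσ4 hWm hWp hΔ (n + 1)
  exact ⟨(hW n n.le_succ).1, (hW n n.le_succ).2, (hG n n.lt_succ_self).1,
    (hG n n.lt_succ_self).2⟩

end Alt
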